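/- In the 3-SAT reduction gadget for a single clause (6 vertices: u, v_1, v_2, v_3, two dummies w_1, w_2; edges u–v_k for k = 1,2,3 and red/blue parallel edges v_k–w_j for all k, j), every perfect matching matches u to exactly one literal vertex v_k, and the remaining two literal vertices are matched to the two dummy vertices with freely choosable colors (red or blue). -/
import Mathlib


/-- The six vertices of a single clause gadget: clause vertex `u` (`Sum.inl`), literal
vertices `v_k` (`Sum.inr ∘ Sum.inl`), dummy vertices `w_j` (`Sum.inr ∘ Sum.inr`). -/
abbrev Gadget1V := Unit ⊕ Fin 3 ⊕ Fin 2

/-- The single-clause gadget (colors `Bool`, `true` = red): `u` is joined to each `v_k` by a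
monochromatic edge colored `pos k` (red iff literal `k` is positive), and each pair
`(v_k, w_j)` is joined by both a red and a blue monochromatic edge. -/
def gadget1Col (pos : Fin 3 → Bool) : Gadget1V → Gadget1V → Finset (Bool × Bool)
  | Sum.inl _, Sum.inr (Sum.inl k) => {(pos k, pos k)}
  | Sum.inr (Sum.inl k), Sum.inl _ => {(pos k, pos k)}
  | Sum.inr (Sum.inl _), Sum.inr (Sum.inr _) => {(true, true), (false, false)}
  | Sum.inr (Sum.inr _), Sum.inr (Sum.inl _) => {(true, true), (false, false)}
  | _, _ => ∅

/-- Perfect matching (fixed-point-free involution along edges) with inherited coloring. -/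
def IsPM {V : Type*} (col : V → V → Finset (Bool × Bool))
    (π : Equiv.Perm V) (c : V → Bool) : Prop :=
  (∀ x, π (π x) = x) ∧ (∀ x, π x ≠ x) ∧ ∀ x, (c x, c (π x)) ∈ col x (π x)

/-- the smaller of the two indices other than `k` -/
def ga (k : Fin 3) : Fin 3 := if k = 0 then 1 else 0
/-- the larger of the two indices other than `k` -/
def gb (k : Fin 3) : Fin 3 := if k = 2 then 1 else 2

/-- the explicit matching: `u ↔ v_k`, `v_{ga k} ↔ w_0`, `v_{gb k} ↔ w_1` -/
def gf (k : Fin 3) : Gadget1V → Gadget1V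
  | Sum.inl _ => Sum.inr (Sum.inl k)
  | Sum.inr (Sum.inl m) =>
      if m = k then Sum.inl ()
      else if m = ga k then Sum.inr (Sum.inr 0) else Sum.inr (Sum.inr 1)
  | Sum.inr (Sum.inr j) =>
      if j = 0 then Sum.inr (Sum.inl (ga k)) else Sum.inr (Sum.inl (gb k))

lemma gf_invol : ∀ k : Fin 3, Function.Involutive (gf k) := fun k x => by revert k x; decide

lemma gf_ne : ∀ (k : Fin 3) (x : Gadget1V), gf k x ≠ x := by decide

lemma pair_mem (b : Bool) :
    (b, b) ∈ ({(true, true), (false, false)} : Finset (Bool × Bool)) := by cases b <;> decide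

lemma other_eq (k m : Fin 3) (h1 : m ≠ k) (h2 : m ≠ ga k) : m = gb k := by
  revert k m; decide

/-- In the single-clause gadget, every perfect matching matches `u` to exactly one literal
vertex `v_k` and the remaining two literal vertices to the two dummies; conversely, for any
choice of a literal `k` (matched to `u`, forced color `pos k`) and any colors for the other
two literal vertices, there is a perfect matching realizing these inherited colors. -/
theorem stmt_18 (pos : Fin 3 → Bool) :
    (∀ (π : Equiv.Perm Gadget1V) (c : Gadget1V → Bool), IsPM (gadget1Col pos) π c →
      ∃ k : Fin 3, π (Sum.inl ()) = Sum.inr (Sum.inl k) ∧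
        ∀ k' : Fin 3, k' ≠ k → ∃ j : Fin 2, π (Sum.inr (Sum.inl k')) = Sum.inr (Sum.inr j)) ∧
    ∀ (k : Fin 3) (g : Fin 3 → Bool), g k = pos k →
      ∃ (π : Equiv.Perm Gadget1V) (c : Gadget1V → Bool),
        IsPM (gadget1Col pos) π c ∧ π (Sum.inl ()) = Sum.inr (Sum.inl k) ∧
        ∀ k' : Fin 3, c (Sum.inr (Sum.inl k')) = g k' := by
  constructor
  · rintro π c ⟨hinv, hne, hcol⟩
    have h1 := hcol (Sum.inl ())
    cases hy : π (Sum.inl ()) with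
    | inl a => rw [hy] at h1; simp [gadget1Col] at h1
    | inr y =>
      cases y with
      | inr j => rw [hy] at h1; simp [gadget1Col] at h1
      | inl k =>
        refine ⟨k, rfl, ?_⟩
        have hπk : π (Sum.inr (Sum.inl k)) = Sum.inl () := by
          have := hinv (Sum.inl ()); rwa [hy] at this
        intro k' hk'
        have h2 := hcol (Sum.inr (Sum.inl k'))
        cases hy' : π (Sum.inr (Sum.inl k')) with
        | inl a =>
          cases a
          have := π.injective (hy'.trans hπk.symm)
          simp at this
          exact absurd this hk'
        | inr y' =>
          cases y' with
          | inl m => rw [hy'] at h2; simp [gadget1Col] at h2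
          | inr j => exact ⟨j, rfl⟩
  · intro k g hg
    refine ⟨(gf_invol k).toPerm, (fun x => match x with
        | Sum.inl _ => pos k
        | Sum.inr (Sum.inl m) => g m
        | Sum.inr (Sum.inr j) => if j = 0 then g (ga k) else g (gb k)),
      ⟨gf_invol k, gf_ne k, ?_⟩, rfl, fun k' => rfl⟩
    intro x
    fin_cases k <;> rcases x with ⟨⟩ | ⟨m | j⟩ <;>
      [skip; fin_cases m; fin_cases j; skip; fin_cases m; fin_cases j;
       skip; fin_cases m; fin_cases j] <;>
      first
        | exact pair_mem _
        | simp_all [gf, ga, gb, gadget1Col, Function.Involutive.toPerm]
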